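/- arXiv:1005.2070 — 5 statements merged into one kernel-verified Lean document; each statement's English description precedes it below -/
import Mathlib

section
/- Let A = (a_{ih}) be an n×n complex matrix such that Re(a_{ii}) + Σ_{h≠i} |a_{ih}| ≤ 0 for all i = 1,…,n. Then the semigroup generated by A is ℓ∞-contractive, i.e., ‖exp(tA) x‖_∞ ≤ ‖x‖_∞ for all t ≥ 0 and all x ∈ ℂⁿ. -/
open Matrix Finset Filter Topology

/-! Shift `A` by a large real multiple of the identity. Since `|a_ii + c| = c + Re a_ii + O(1/c)`,
the row-sum norm of `A + c I` is at most `c + μ + o(1)` as `c → ∞`, where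
`μ = max_i (Re a_ii + ∑_{h ≠ i} |a_ih|)`. Combined with `exp(tA) = e^{-tc} exp(t(A + cI))` and
`‖exp B‖ ≤ e^{‖B‖}`, this gives `‖exp(tA)‖_∞ ≤ e^{tμ}`, which is at most `1` when `μ ≤ 0`. -/

namespace NormedSpace

variable {𝔸 : Type*} [NormedRing 𝔸] [NormedAlgebra ℝ 𝔸]

lemma norm_exp_le_exp_norm [NormOneClass 𝔸] (B : 𝔸) : ‖exp B‖ ≤ Real.exp ‖B‖ := by
  rw [exp_eq_tsum ℝ, Real.exp_eq_exp_ℝ, exp_eq_tsum ℝ]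
  refine (norm_tsum_le_tsum_norm (norm_expSeries_summable' B)).trans
    (Summable.tsum_le_tsum (fun k => ?_) (norm_expSeries_summable' B)
      (expSeries_summable' ‖B‖))
  rw [norm_smul, smul_eq_mul, norm_inv, RCLike.norm_natCast]
  gcongr
  exact norm_pow_le B k

variable [CompleteSpace 𝔸]

lemma exp_add_smul_one (B : 𝔸) (c : ℝ) : exp (B + c • 1) = Real.exp c • exp B := by
  let +nondep : NormedAlgebra ℚ 𝔸 := .restrictScalars ℚ ℝ 𝔸
  rw [exp_add_of_commute ((Commute.one_right B).smul_right c), ← Algebra.algebraMap_eq_smul_one,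
    ← algebraMap_exp_comm, Algebra.algebraMap_eq_smul_one, mul_smul_comm, mul_one,
    Real.exp_eq_exp_ℝ]

lemma norm_exp_le_of_norm_add_smul_one_le [NormOneClass 𝔸] {B : 𝔸} {c r : ℝ}
    (h : ‖B + c • 1‖ ≤ c + r) : ‖exp B‖ ≤ Real.exp r := by
  have hexp : exp B = Real.exp (-c) • exp (B + c • 1) := by
    rw [exp_add_smul_one, smul_smul, ← Real.exp_add, neg_add_cancel, Real.exp_zero, one_smul]
  calc ‖exp B‖ = Real.exp (-c) * ‖exp (B + c • 1)‖ := by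
        rw [hexp, norm_smul, Real.norm_of_nonneg (Real.exp_pos _).le]
    _ ≤ Real.exp (-c) * Real.exp (c + r) := by
        gcongr
        exact (norm_exp_le_exp_norm _).trans (Real.exp_le_exp.2 h)
    _ = Real.exp r := by rw [← Real.exp_add, neg_add_cancel_left]

/-- The hypothesis says that the logarithmic norm `lim_{c → ∞} (‖B + c‖ - c)` of `B` is at
most `μ`. -/
lemma norm_exp_smul_le_of_logNorm_le [NormOneClass 𝔸] {B : 𝔸} {μ : ℝ}
    (hB : ∀ ε > 0, ∃ c : ℝ, ‖B + c • 1‖ ≤ c + μ + ε) {t : ℝ} (ht : 0 ≤ t) :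
    ‖exp (t • B)‖ ≤ Real.exp (t * μ) := by
  have key : ∀ ε > 0, ‖exp (t • B)‖ ≤ Real.exp (t * μ + ε) := by
    intro ε hε
    obtain ⟨c, hc⟩ := hB (ε / (t + 1)) (by positivity)
    have htε : t * (ε / (t + 1)) ≤ ε := by
      rw [mul_div_assoc', div_le_iff₀ (by positivity)]
      nlinarith
    refine norm_exp_le_of_norm_add_smul_one_le (c := t * c) ?_
    calc ‖t • B + (t * c) • (1 : 𝔸)‖ = t * ‖B + c • 1‖ := by
          rw [mul_smul, ← smul_add, norm_smul, Real.norm_of_nonneg ht]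
      _ ≤ t * (c + μ + ε / (t + 1)) := by gcongr
      _ ≤ t * c + (t * μ + ε) := by rw [mul_add, mul_add]; linarith
  have hlim : Tendsto (fun ε => Real.exp (t * μ + ε)) (𝓝[>] 0) (𝓝 (Real.exp (t * μ))) := by
    simpa using ((continuous_const.add continuous_id).rexp.tendsto 0).mono_left
      nhdsWithin_le_nhds
  exact ge_of_tendsto hlim (eventually_nhdsWithin_of_forall key)

end NormedSpace

lemma Complex.eventually_norm_add_ofReal_le (z : ℂ) {ε : ℝ} (hε : 0 < ε) :
    ∀ᶠ c : ℝ in atTop, ‖z + c‖ ≤ c + z.re + ε := by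
  filter_upwards [eventually_ge_atTop (z.im ^ 2 / (2 * ε) - z.re)] with c hc
  have him : z.im ^ 2 ≤ 2 * ε * (c + z.re) := by
    rw [← div_le_iff₀' (by positivity)]
    linarith
  have hs : 0 ≤ c + z.re := by nlinarith [sq_nonneg z.im]
  rw [← pow_le_pow_iff_left₀ (norm_nonneg _) (by positivity) two_ne_zero, Complex.sq_norm,
    Complex.normSq_apply]
  simp only [Complex.add_re, Complex.ofReal_re, Complex.add_im, Complex.ofReal_im, add_zero]
  nlinarith

namespace Matrix

section LinftyOpNorm

attribute [local instance] Matrix.linftyOpSeminormedAddCommGroup Matrix.linftyOpNormedRing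
  Matrix.linftyOpNormedAlgebra

lemma linfty_opNorm_le_of_forall_sum_le {m n α : Type*} [Fintype m] [Fintype n]
    [SeminormedAddCommGroup α] {A : Matrix m n α} {r : ℝ} (hr : 0 ≤ r)
    (h : ∀ i, ∑ j, ‖A i j‖ ≤ r) : ‖A‖ ≤ r := by
  rw [linfty_opNorm_def, ← Real.coe_toNNReal r hr, NNReal.coe_le_coe, Finset.sup_le_iff]
  intro i _
  rw [← NNReal.coe_le_coe, Real.coe_toNNReal r hr, NNReal.coe_sum]
  exact h i

variable {ι : Type*} [Fintype ι] [DecidableEq ι]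

lemma sum_norm_add_smul_one_apply (A : Matrix ι ι ℂ) (c : ℝ) (i : ι) :
    ∑ j, ‖(A + c • 1) i j‖ = ‖A i i + c‖ + ∑ j ∈ univ.erase i, ‖A i j‖ := by
  rw [← add_sum_erase _ _ (mem_univ i)]
  congr 1
  · simp [Complex.real_smul]
  · refine sum_congr rfl fun j hj => ?_
    simp [one_apply_ne' (ne_of_mem_erase hj)]

lemma eventually_linfty_opNorm_add_smul_one_le (A : Matrix ι ι ℂ) {μ : ℝ}
    (hA : ∀ i, (A i i).re + ∑ j ∈ univ.erase i, ‖A i j‖ ≤ μ) {ε : ℝ} (hε : 0 < ε) :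
    ∀ᶠ c : ℝ in atTop, ‖A + c • 1‖ ≤ c + μ + ε := by
  have hdiag := eventually_all.2 fun i => (A i i).eventually_norm_add_ofReal_le hε
  filter_upwards [hdiag, eventually_ge_atTop (-μ - ε)] with c hc hcμ
  refine linfty_opNorm_le_of_forall_sum_le (by linarith) fun i => ?_
  rw [sum_norm_add_smul_one_apply]
  linarith [hc i, hA i]

lemma norm_exp_smul_mulVec_le [Nonempty ι] (A : Matrix ι ι ℂ) {μ : ℝ}
    (hA : ∀ i, (A i i).re + ∑ j ∈ univ.erase i, ‖A i j‖ ≤ μ) {t : ℝ} (ht : 0 ≤ t)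
    (x : ι → ℂ) : ‖NormedSpace.exp (t • A) *ᵥ x‖ ≤ Real.exp (t * μ) * ‖x‖ := by
  have hA' : ∀ ε > 0, ∃ c : ℝ, ‖A + c • 1‖ ≤ c + μ + ε := fun ε hε =>
    (eventually_linfty_opNorm_add_smul_one_le A hA hε).exists
  exact (linfty_opNorm_mulVec _ x).trans
    (by gcongr; exact NormedSpace.norm_exp_smul_le_of_logNorm_le hA' ht)

end LinftyOpNorm

end Matrix

/-- If `Re(a_ii) + ∑_{h≠i} |a_ih| ≤ 0` for all `i`, then the semigroup generated by `A`
is `ℓ∞`-contractive: `‖exp(tA) x‖_∞ ≤ ‖x‖_∞` for all `t ≥ 0` and `x ∈ ℂⁿ`. -/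
theorem stmt_0 (n : ℕ) (A : Matrix (Fin n) (Fin n) ℂ)
    (hA : ∀ i : Fin n, (A i i).re + ∑ h ∈ Finset.univ.erase i, ‖A i h‖ ≤ 0) :
    ∀ t : ℝ, 0 ≤ t → ∀ x : Fin n → ℂ,
      ‖(NormedSpace.exp (t • A)).mulVec x‖ ≤ ‖x‖ := by
  intro t ht x
  cases isEmpty_or_nonempty (Fin n)
  · rw [Subsingleton.elim ((NormedSpace.exp (t • A)).mulVec x) x]
  simpa using A.norm_exp_smul_mulVec_le hA ht x
end

section
/- Let A = (a_{ih}) be an n×n complex matrix such that ‖exp(tA) x‖_∞ ≤ ‖x‖_∞ for all t ≥ 0 and x ∈ ℂⁿ. Then Re(a_{ii}) + Σ_{h≠i} |a_{ih}| ≤ 0 for all i = 1,…,n. -/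
/-!
Test the contraction on the vector `x` with `x i = 1` and `x h = conj (a_ih) / |a_ih|` for
`h ≠ i`: it has `‖x‖_∞ ≤ 1` and `(A x)_i = a_ii + ∑_{h≠i} |a_ih|`. The real function
`t ↦ Re (exp(tA) x)_i` is bounded by `‖exp(tA) x‖_∞ ≤ 1` for `t ≥ 0` and equals `1` at `t = 0`,
so its derivative `Re (A x)_i` at `0` is nonpositive.
-/

open Matrix Finset ComplexConjugate

namespace RCLike

variable {𝕜 : Type*} [RCLike 𝕜]

lemma mul_conj_div_norm (z : 𝕜) : z * (conj z / ‖z‖) = ‖z‖ := by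
  rcases eq_or_ne z 0 with rfl | hz
  · simp
  · rw [mul_div_assoc', mul_conj, ← ofReal_pow, sq, ofReal_mul,
      mul_div_cancel_right₀ _ (ofReal_ne_zero.mpr (norm_ne_zero_iff.mpr hz))]

lemma norm_conj_div_norm_le_one (z : 𝕜) : ‖conj z / (‖z‖ : 𝕜)‖ ≤ 1 := by
  rw [norm_div, norm_conj, norm_ofReal, abs_norm]
  exact div_self_le_one _

end RCLike

lemma exists_norm_le_one_dotProduct_eq_add_sum_norm {𝕜 ι : Type*} [RCLike 𝕜] [Fintype ι]
    [DecidableEq ι] (r : ι → 𝕜) (i : ι) :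
    ∃ x : ι → 𝕜, ‖x‖ ≤ 1 ∧ x i = 1 ∧ r ⬝ᵥ x = r i + ∑ j ∈ univ.erase i, (‖r j‖ : 𝕜) := by
  refine ⟨Function.update (fun j ↦ conj (r j) / ‖r j‖) i 1, ?_, by simp, ?_⟩
  · refine (pi_norm_le_iff_of_nonneg zero_le_one).mpr fun j ↦ ?_
    rcases eq_or_ne j i with rfl | hj
    · simp
    · simpa [hj] using RCLike.norm_conj_div_norm_le_one (r j)
  · rw [dotProduct, ← add_sum_erase _ _ (mem_univ i), Function.update_self, mul_one]
    refine congrArg _ (sum_congr rfl fun j hj ↦ ?_)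
    rw [Function.update_of_ne (ne_of_mem_erase hj), RCLike.mul_conj_div_norm]

lemma IsLocalMaxOn.hasDerivWithinAt_Ici_nonpos {f : ℝ → ℝ} {f' a : ℝ}
    (h : IsLocalMaxOn f (Set.Ici a) a) (hf : HasDerivWithinAt f f' (Set.Ici a) a) : f' ≤ 0 := by
  have hcone : (1 : ℝ) ∈ posTangentConeAt (Set.Ici a) a :=
    mem_posTangentConeAt_of_segment_subset (by simp [segment_eq_Icc, Set.Icc_subset_Ici_self])
  simpa using h.hasFDerivWithinAt_nonpos hf.hasFDerivWithinAt hcone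

lemma hasDerivAt_exp_smul_const_zero {𝕂 𝔸 : Type*} [RCLike 𝕂] [NormedRing 𝔸] [NormedAlgebra 𝕂 𝔸]
    [CompleteSpace 𝔸] (x : 𝔸) : HasDerivAt (fun t : 𝕂 ↦ NormedSpace.exp (t • x)) x 0 := by
  simpa using hasDerivAt_exp_smul_const' x (0 : 𝕂)

section

-- `NormedSpace.exp` only depends on the topology, so any normed-algebra structure on matrices
-- inducing the product topology can be used to differentiate it.
attribute [local instance] Matrix.linftyOpNormedRing Matrix.linftyOpNormedAlgebra

/-- If the semigroup generated by the complex matrix `A` is `ℓ∞`-contractive, then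
`Re(a_ii) + ∑_{h≠i} |a_ih| ≤ 0` for all `i`. -/
theorem stmt_1 (n : ℕ) (A : Matrix (Fin n) (Fin n) ℂ)
    (hcontr : ∀ t : ℝ, 0 ≤ t → ∀ x : Fin n → ℂ,
      ‖(NormedSpace.exp (t • A)).mulVec x‖ ≤ ‖x‖) :
    ∀ i : Fin n, (A i i).re + ∑ h ∈ Finset.univ.erase i, ‖A i h‖ ≤ 0 := by
  intro i
  obtain ⟨x, hx_norm, hx_i, hAx⟩ := exists_norm_le_one_dotProduct_eq_add_sum_norm (A i) i
  let ψ : Matrix (Fin n) (Fin n) ℂ →L[ℝ] ℝ := LinearMap.toContinuousLinearMap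
    { toFun := fun M ↦ ((M *ᵥ x) i).re
      map_add' := fun M N ↦ by simp [add_mulVec]
      map_smul' := fun c M ↦ by simp [smul_mulVec] }
  have hψA : ψ A = (A i i).re + ∑ h ∈ univ.erase i, ‖A i h‖ := by
    change (A i ⬝ᵥ x).re = _
    simp only [hAx, Complex.add_re, Complex.re_sum, RCLike.ofReal_eq_complex_ofReal,
      Complex.ofReal_re]
  have hmax : IsMaxOn (fun t : ℝ ↦ ψ (NormedSpace.exp (t • A))) (Set.Ici 0) 0 := by
    refine isMaxOn_iff.mpr fun t ht ↦ ?_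
    have hψ0 : ψ (NormedSpace.exp ((0 : ℝ) • A)) = 1 := by simp [ψ, hx_i]
    calc ψ (NormedSpace.exp (t • A)) ≤ ‖(NormedSpace.exp (t • A) *ᵥ x) i‖ := Complex.re_le_norm _
      _ ≤ ‖NormedSpace.exp (t • A) *ᵥ x‖ := norm_le_pi_norm _ i
      _ ≤ 1 := (hcontr t ht x).trans hx_norm
      _ = _ := hψ0.symm
  have hderiv := ψ.hasFDerivAt.comp_hasDerivAt (0 : ℝ) (hasDerivAt_exp_smul_const_zero A)
  exact hψA ▸ hmax.localize.hasDerivWithinAt_Ici_nonpos hderiv.hasDerivWithinAt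

end
end

section
/- Let G be a finite connected graph with m edges, each parametrized on [0,1], and a distinguished vertex v_n. Let V₀ be the space of functions f = (f₁,…,f_m) with each f_j ∈ H¹(0,1), which are continuous at each vertex (endpoint values of f_j coincide whenever edges meet at a common vertex) and vanish at v_n. Then there is a Poincaré-type inequality: Σ_{j=1}^m ∫₀¹ |f_j(x)| dx ≤ m · Σ_{j=1}^m ∫₀¹ |f_j'(x)| dx for all f ∈ V₀. -/
/-
Along an edge `k` the values of `f_k` vary by at most `A k = ∫₀¹ |f_k'|`; in particular
`|d a - d b| ≤ A k` for the endpoints `a, b` of `k`. A walk that uses an edge twice can skip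
everything in between, so `|d v - d w| ≤ ∑_{k ∈ E} A k` whenever `v` and `w` are joined by edges
from `E`. A walk from `vn` to `tail j`, stopped at its first visit to an endpoint of `j`, avoids
`j`; hence `|f_j| ≤ ∑_{k ≠ j} A k + A j = ∑_k A k` on all of `[0, 1]`, and summing over the `m`
edges gives the factor `m`.
-/

open MeasureTheory Relation Set
open scoped Interval

namespace Network

variable {V ι : Type*} (tail head : ι → V)

def Joins (j : ι) (a b : V) : Prop :=
  (tail j = a ∧ head j = b) ∨ (tail j = b ∧ head j = a)

def Adj (E : Finset ι) (a b : V) : Prop :=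
  ∃ j ∈ E, Joins tail head j a b

variable {tail head}

theorem Joins.eq_and_eq_or {j : ι} {a b w z : V} (hab : Joins tail head j a b)
    (hwz : Joins tail head j w z) : (a = w ∧ b = z) ∨ (a = z ∧ b = w) := by
  unfold Joins at hab hwz
  grind

instance (E : Finset ι) : Std.Symm (Adj tail head E) :=
  ⟨fun _ _ ⟨j, hj, hab⟩ => ⟨j, hj, Or.symm hab⟩⟩

theorem reflTransGen_adj_erase_or [DecidableEq ι] {E : Finset ι} {j : ι} {x y : V}
    (h : ReflTransGen (Adj tail head E) x y) :
    ReflTransGen (Adj tail head (E.erase j)) x y ∨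
      ∃ a b, Joins tail head j a b ∧ ReflTransGen (Adj tail head (E.erase j)) x a ∧
        ReflTransGen (Adj tail head (E.erase j)) b y := by
  induction h with
  | refl => exact .inl .refl
  | @tail w z _ hwz ih =>
    obtain ⟨k, hk, hkwz⟩ := hwz
    by_cases hkj : k = j
    · subst hkj
      rcases ih with hxw | ⟨a, b, hab, hxa, hbw⟩
      · exact .inr ⟨w, z, hkwz, hxw, .refl⟩
      · rcases hab.eq_and_eq_or hkwz with ⟨rfl, rfl⟩ | ⟨rfl, rfl⟩
        · exact .inr ⟨_, _, hab, hxa, .refl⟩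
        · exact .inl hxa
    · have hwz : Adj tail head (E.erase j) w z := ⟨k, Finset.mem_erase.2 ⟨hkj, hk⟩, hkwz⟩
      exact ih.imp (·.tail hwz) fun ⟨a, b, hab, hxa, hbw⟩ => ⟨a, b, hab, hxa, hbw.tail hwz⟩

theorem dist_le_sum_of_reflTransGen_adj {X : Type*} [PseudoMetricSpace X] {d : V → X}
    {A : ι → ℝ} (hA : ∀ k, dist (d (tail k)) (d (head k)) ≤ A k) {E : Finset ι} {x y : V}
    (h : ReflTransGen (Adj tail head E) x y) : dist (d x) (d y) ≤ ∑ k ∈ E, A k := by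
  classical
  induction E using Finset.strongInduction generalizing x y with
  | H E ih =>
  have hA0 : ∀ l, 0 ≤ A l := fun l => dist_nonneg.trans (hA l)
  rcases h.cases_head with rfl | ⟨u, ⟨k, hk, hkxu⟩, huy⟩
  · rw [dist_self]
    exact Finset.sum_nonneg fun l _ => hA0 l
  have hxu : dist (d x) (d u) ≤ A k := by
    rcases hkxu with ⟨rfl, rfl⟩ | ⟨rfl, rfl⟩
    exacts [hA k, dist_comm (d (head k)) _ ▸ hA k]
  rcases reflTransGen_adj_erase_or (j := k) huy with huy' | ⟨a, b, hab, hua, hby⟩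
  · calc dist (d x) (d y) ≤ dist (d x) (d u) + dist (d u) (d y) := dist_triangle _ _ _
      _ ≤ A k + ∑ l ∈ E.erase k, A l := add_le_add hxu (ih _ (Finset.erase_ssubset hk) huy')
      _ = ∑ l ∈ E, A l := Finset.add_sum_erase E A hk
  · -- the edge `k` is used again later, so the walk from `x` to `y` can skip it altogether
    have hxy : ReflTransGen (Adj tail head (E.erase k)) x y := by
      rcases hab.eq_and_eq_or hkxu with ⟨rfl, rfl⟩ | ⟨rfl, rfl⟩
      exacts [(Std.Symm.symm _ _ hua).trans hby, hby]
    exact (ih _ (Finset.erase_ssubset hk) hxy).trans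
      (Finset.sum_le_sum_of_subset_of_nonneg (Finset.erase_subset k E) fun l _ _ => hA0 l)

theorem exists_endpoint_dist_le_sum_erase [DecidableEq ι] {X : Type*} [PseudoMetricSpace X]
    {d : V → X} {A : ι → ℝ} (hA : ∀ k, dist (d (tail k)) (d (head k)) ≤ A k) {E : Finset ι}
    {j : ι} {x : V} (h : ReflTransGen (Adj tail head E) x (tail j)) :
    ∃ u, (u = tail j ∨ u = head j) ∧ dist (d x) (d u) ≤ ∑ k ∈ E.erase j, A k := by
  rcases reflTransGen_adj_erase_or (j := j) h with hxt | ⟨a, b, hab, hxa, -⟩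
  · exact ⟨_, .inl rfl, dist_le_sum_of_reflTransGen_adj hA hxt⟩
  · refine ⟨a, ?_, dist_le_sum_of_reflTransGen_adj hA hxa⟩
    rcases hab with ⟨rfl, -⟩ | ⟨-, rfl⟩
    exacts [.inl rfl, .inr rfl]

end Network

theorem dist_le_integral_norm_of_eq_add_integral {E : Type*} [NormedAddCommGroup E]
    [NormedSpace ℝ E] {g g' : ℝ → E} {a b : ℝ} (hg' : IntervalIntegrable g' volume a b)
    (hg : ∀ x ∈ Icc a b, g x = g a + ∫ s in a..x, g' s) {x y : ℝ}
    (hx : x ∈ Icc a b) (hy : y ∈ Icc a b) :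
    dist (g x) (g y) ≤ ∫ s in a..b, ‖g' s‖ := by
  have hab : a ≤ b := hx.1.trans hx.2
  rw [← uIcc_of_le hab] at hx hy
  have hdiff : g x - g y = ∫ s in y..x, g' s := by
    rw [hg x (uIcc_of_le hab ▸ hx), hg y (uIcc_of_le hab ▸ hy), add_sub_add_left_eq_sub,
      intervalIntegral.integral_interval_sub_left (hg'.mono_set (uIcc_subset_uIcc_left hx))
        (hg'.mono_set (uIcc_subset_uIcc_left hy))]
  rw [dist_eq_norm, hdiff, intervalIntegral.integral_of_le hab]
  calc ‖∫ s in y..x, g' s‖ ≤ ∫ s in Ι y x, ‖g' s‖ :=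
        intervalIntegral.norm_integral_le_integral_norm_uIoc
    _ ≤ ∫ s in Ι a b, ‖g' s‖ :=
        setIntegral_mono_set hg'.def'.norm (.of_forall fun _ => norm_nonneg _)
          (.of_forall (uIoc_subset_uIoc_of_uIcc_subset_uIcc (uIcc_subset_uIcc hy hx)))
    _ = ∫ s in Ioc a b, ‖g' s‖ := by rw [uIoc_of_le hab]

theorem integral_norm_le_mul_of_norm_le {E : Type*} [SeminormedAddCommGroup E]
    {g : ℝ → E} {a b C : ℝ} (hab : a ≤ b) (h : ∀ x ∈ Ioc a b, ‖g x‖ ≤ C) :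
    ∫ x in a..b, ‖g x‖ ≤ C * (b - a) := by
  have := intervalIntegral.norm_integral_le_of_norm_le_const (f := fun x => ‖g x‖)
    fun x hx => (norm_norm (g x)).symm ▸ h x (uIoc_of_le hab ▸ hx)
  rw [abs_of_nonneg (sub_nonneg.2 hab)] at this
  exact (Real.le_norm_self _).trans this

/-- Poincaré-type inequality on a finite connected network with a Dirichlet vertex `vn`:
for `f ∈ V₀` (edgewise `H¹` functions, given via their absolutely continuous
representatives, continuous at the vertices and vanishing at `vn`),
`∑_j ∫₀¹ |f_j| ≤ m · ∑_j ∫₀¹ |f_j'|`. -/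
theorem stmt_4 (n m : ℕ) (tail head : Fin m → Fin n) (vn : Fin n)
    (hconn : ∀ v : Fin n, Relation.ReflTransGen
      (fun a b => ∃ j, (tail j = a ∧ head j = b) ∨ (tail j = b ∧ head j = a)) vn v)
    (f f' : Fin m → ℝ → ℂ) (d : Fin n → ℂ)
    (hint : ∀ j, IntervalIntegrable (f' j) volume 0 1)
    (hftc : ∀ j, ∀ x ∈ Set.Icc (0:ℝ) 1, f j x = f j 0 + ∫ s in (0:ℝ)..x, f' j s)
    (h0 : ∀ j, f j 0 = d (tail j)) (h1 : ∀ j, f j 1 = d (head j))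
    (hD : d vn = 0) :
    ∑ j, ∫ x in (0:ℝ)..1, ‖f j x‖ ≤ m * ∑ j, ∫ x in (0:ℝ)..1, ‖f' j x‖ := by
  set A : Fin m → ℝ := fun k => ∫ x in (0:ℝ)..1, ‖f' k x‖
  have hvar : ∀ j, ∀ x ∈ Icc (0:ℝ) 1, ∀ y ∈ Icc (0:ℝ) 1, dist (f j x) (f j y) ≤ A j :=
    fun j _ hx _ hy => dist_le_integral_norm_of_eq_add_integral (hint j) (hftc j) hx hy
  have hedge : ∀ k, dist (d (tail k)) (d (head k)) ≤ A k := fun k => by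
    simpa only [h0, h1] using hvar k 0 (left_mem_Icc.2 zero_le_one) 1 (right_mem_Icc.2 zero_le_one)
  have hsup : ∀ j, ∀ x ∈ Icc (0:ℝ) 1, ‖f j x‖ ≤ ∑ k, A k := by
    intro j x hx
    obtain ⟨u, hu, hdu⟩ := Network.exists_endpoint_dist_le_sum_erase hedge
      (ReflTransGen.mono (fun _ _ ⟨k, hk⟩ => ⟨k, Finset.mem_univ k, hk⟩) _ _ (hconn (tail j)))
    rw [hD, dist_comm, dist_zero_right] at hdu
    obtain ⟨e, he, hfe⟩ : ∃ e ∈ Icc (0:ℝ) 1, f j e = d u := by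
      rcases hu with rfl | rfl
      exacts [⟨0, left_mem_Icc.2 zero_le_one, h0 j⟩, ⟨1, right_mem_Icc.2 zero_le_one, h1 j⟩]
    calc ‖f j x‖ ≤ ‖f j e‖ + dist (f j x) (f j e) := by
          rw [dist_eq_norm]; exact norm_le_norm_add_norm_sub' _ _
      _ ≤ (∑ k ∈ Finset.univ.erase j, A k) + A j := add_le_add (hfe ▸ hdu) (hvar j x hx e he)
      _ = ∑ k, A k := Finset.sum_erase_add _ _ (Finset.mem_univ j)
  calc ∑ j, ∫ x in (0:ℝ)..1, ‖f j x‖ ≤ ∑ _j : Fin m, ∑ k, A k := Finset.sum_le_sum fun j _ => by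
        simpa using integral_norm_le_mul_of_norm_le zero_le_one fun x hx =>
          hsup j x (Ioc_subset_Icc_self hx)
    _ = m * ∑ k, A k := by simp
end

section
/- There exists a constant M₁ > 0 such that for all k ∈ H¹(0,1), ‖k‖_{L²(0,1)} ≤ M₁ · ‖k‖_{H¹(0,1)}^{1/3} · ‖k‖_{L¹(0,1)}^{2/3}. -/
/-!
For `0 < h ≤ 1`, every point of `[0,1]` lies in a subinterval `I` of length `h`; averaging
`‖k x‖ ≤ ‖k t‖ + ∫_I ‖k'‖` over `t ∈ I` and applying Cauchy–Schwarz gives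
`‖k‖_∞ ≤ ‖k‖₁ / h + √(h ‖k'‖₂²)`, hence `‖k‖₂² ≤ (‖k‖₁ / h + √(h ‖k'‖₂²)) ‖k‖₁`.
The choice `h = 2 ‖k‖₁² / ‖k‖₂²` turns this into `‖k‖₂⁶ ≤ 8 ‖k'‖₂² ‖k‖₁⁴`, unless
`‖k‖₂² < 2 ‖k‖₁²`, in which case `‖k‖₂⁶ ≤ 4 ‖k‖₂² ‖k‖₁⁴` directly.
-/

open MeasureTheory Set intervalIntegral

theorem sq_intervalIntegral_le {f : ℝ → ℝ} {a b : ℝ} (hab : a ≤ b)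
    (hf : IntervalIntegrable f volume a b)
    (hf2 : IntervalIntegrable (fun x => f x ^ 2) volume a b) :
    (∫ x in a..b, f x) ^ 2 ≤ (b - a) * ∫ x in a..b, f x ^ 2 := by
  rcases hab.eq_or_lt with rfl | hlt
  · simp
  set L := b - a
  set I := ∫ x in a..b, f x
  set J := ∫ x in a..b, f x ^ 2
  have hexpand : ∫ x in a..b, (L * f x - I) ^ 2 = L * (L * J - I ^ 2) := by
    have hsq : ∀ x, (L * f x - I) ^ 2 = L ^ 2 * f x ^ 2 - 2 * L * I * f x + I ^ 2 :=
      fun x => by ring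
    simp_rw [hsq]
    rw [integral_add ((hf2.const_mul _).sub (hf.const_mul _)) intervalIntegrable_const,
      integral_sub (hf2.const_mul _) (hf.const_mul _), intervalIntegral.integral_const_mul,
      intervalIntegral.integral_const_mul, intervalIntegral.integral_const, smul_eq_mul]
    ring
  have hnonneg : 0 ≤ L * (L * J - I ^ 2) :=
    hexpand ▸ integral_nonneg hab fun x _ => sq_nonneg _
  linarith [(mul_nonneg_iff_of_pos_left (sub_pos.2 hlt)).1 hnonneg]

section AbsolutelyContinuous

variable {E : Type*} [NormedAddCommGroup E] {k k' : ℝ → E} {a b : ℝ}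

theorem integral_norm_sq_le_mul_integral_norm (hab : a ≤ b) (hk : ContinuousOn k (Icc a b))
    {M : ℝ} (hM : ∀ x ∈ Icc a b, ‖k x‖ ≤ M) :
    ∫ x in a..b, ‖k x‖ ^ 2 ≤ M * ∫ x in a..b, ‖k x‖ := by
  rw [← intervalIntegral.integral_const_mul]
  refine integral_mono_on hab ((hk.norm.pow 2).intervalIntegrable_of_Icc hab)
    ((hk.norm.intervalIntegrable_of_Icc hab).const_mul M) fun x hx => ?_
  rw [sq]
  exact mul_le_mul_of_nonneg_right (hM x hx) (norm_nonneg _)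

variable [NormedSpace ℝ E]

theorem sub_eq_integral_of_eq_add_integral (hk' : IntervalIntegrable k' volume a b)
    (hk : ∀ x ∈ Icc a b, k x = k a + ∫ s in a..x, k' s) {u v : ℝ}
    (hu : u ∈ Icc a b) (hv : v ∈ Icc a b) :
    k v - k u = ∫ s in u..v, k' s := by
  rw [hk v hv, hk u hu, ← integral_interval_sub_left
    (hk'.mono_set (uIcc_subset_uIcc left_mem_uIcc (Icc_subset_uIcc hv)))
    (hk'.mono_set (uIcc_subset_uIcc left_mem_uIcc (Icc_subset_uIcc hu)))]
  abel

theorem continuousOn_of_eq_add_integral (hk' : IntervalIntegrable k' volume a b)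
    (hk : ∀ x ∈ Icc a b, k x = k a + ∫ s in a..x, k' s) :
    ContinuousOn k (Icc a b) :=
  ((continuousOn_const.add (continuousOn_primitive_interval' hk' left_mem_uIcc)).mono
    Icc_subset_uIcc).congr hk

theorem norm_sub_le_integral_norm_of_eq_add_integral (hk' : IntervalIntegrable k' volume a b)
    (hk : ∀ x ∈ Icc a b, k x = k a + ∫ s in a..x, k' s) {c d u v : ℝ}
    (hac : a ≤ c) (hdb : d ≤ b) (hu : u ∈ Icc c d) (hv : v ∈ Icc c d) :
    ‖k v - k u‖ ≤ ∫ s in c..d, ‖k' s‖ := by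
  wlog huv : u ≤ v generalizing u v
  · rw [norm_sub_rev]
    exact this hv hu (le_of_not_ge huv)
  have hcd : Icc c d ⊆ Icc a b := Icc_subset_Icc hac hdb
  rw [sub_eq_integral_of_eq_add_integral hk' hk (hcd hu) (hcd hv)]
  have hcd' : c ≤ d := hu.1.trans hu.2
  calc ‖∫ s in u..v, k' s‖ ≤ ∫ s in u..v, ‖k' s‖ := norm_integral_le_integral_norm huv
    _ ≤ ∫ s in c..d, ‖k' s‖ :=
      integral_mono_interval hu.1 huv hv.2 (Filter.Eventually.of_forall fun _ => norm_nonneg _)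
        (hk'.norm.mono_set (uIcc_subset_uIcc (Icc_subset_uIcc (hcd (left_mem_Icc.2 hcd')))
          (Icc_subset_uIcc (hcd (right_mem_Icc.2 hcd')))))

theorem mul_norm_le_integral_norm_add (hk' : IntervalIntegrable k' volume a b)
    (hk : ∀ x ∈ Icc a b, k x = k a + ∫ s in a..x, k' s) {c h x : ℝ}
    (hac : a ≤ c) (hcb : c + h ≤ b) (hx : x ∈ Icc c (c + h)) :
    h * ‖k x‖ ≤ (∫ t in c..c + h, ‖k t‖) + h * ∫ s in c..c + h, ‖k' s‖ := by
  have hh : c ≤ c + h := hx.1.trans hx.2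
  have hkI : IntervalIntegrable (fun t => ‖k t‖) volume c (c + h) :=
    ((continuousOn_of_eq_add_integral hk' hk).mono (Icc_subset_Icc hac hcb)).norm
      |>.intervalIntegrable_of_Icc hh
  have hmono := integral_mono_on hh intervalIntegrable_const
    (hkI.add intervalIntegrable_const) fun t ht =>
      (norm_le_insert' (k x) (k t)).trans (by
        gcongr; exact norm_sub_le_integral_norm_of_eq_add_integral hk' hk hac hcb ht hx)
  rwa [integral_add hkI intervalIntegrable_const, intervalIntegral.integral_const,
    intervalIntegral.integral_const, smul_eq_mul, smul_eq_mul, add_sub_cancel_left] at hmono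

theorem norm_le_div_add_sqrt_of_eq_add_integral (hk' : IntervalIntegrable k' volume a b)
    (hk'2 : IntervalIntegrable (fun x => ‖k' x‖ ^ 2) volume a b)
    (hk : ∀ x ∈ Icc a b, k x = k a + ∫ s in a..x, k' s) {h x : ℝ} (hh : 0 < h) (hhab : h ≤ b - a)
    (hx : x ∈ Icc a b) :
    ‖k x‖ ≤ (∫ t in a..b, ‖k t‖) / h + √(h * ∫ s in a..b, ‖k' s‖ ^ 2) := by
  set c := min x (b - h)
  have hac : a ≤ c := le_min hx.1 (by linarith)
  have hcb : c + h ≤ b := by linarith [min_le_right x (b - h)]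
  have hxc : x ∈ Icc c (c + h) :=
    ⟨min_le_left _ _, by
      rcases (min_choice x (b - h) : c = x ∨ c = b - h) with hc | hc <;> linarith [hx.2]⟩
  have hsub : uIcc c (c + h) ⊆ uIcc a b := by
    rw [uIcc_of_le (by linarith), uIcc_of_le (by linarith)]
    exact Icc_subset_Icc hac hcb
  have hkI : IntervalIntegrable (fun t => ‖k t‖) volume a b :=
    (continuousOn_of_eq_add_integral hk' hk).norm.intervalIntegrable_of_Icc (by linarith)
  have hkc : ∫ t in c..c + h, ‖k t‖ ≤ ∫ t in a..b, ‖k t‖ :=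
    integral_mono_interval hac (by linarith) hcb
      (Filter.Eventually.of_forall fun _ => norm_nonneg _) hkI
  have hk'c : ∫ s in c..c + h, ‖k' s‖ ≤ √(h * ∫ s in a..b, ‖k' s‖ ^ 2) := by
    refine Real.le_sqrt_of_sq_le ?_
    calc (∫ s in c..c + h, ‖k' s‖) ^ 2 ≤ (c + h - c) * ∫ s in c..c + h, ‖k' s‖ ^ 2 :=
          sq_intervalIntegral_le (by linarith) (hk'.norm.mono_set hsub) (hk'2.mono_set hsub)
      _ ≤ h * ∫ s in a..b, ‖k' s‖ ^ 2 := by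
          rw [add_sub_cancel_left]
          gcongr
          exact integral_mono_interval hac (by linarith) hcb
            (Filter.Eventually.of_forall fun _ => by positivity) hk'2
  have hmul := mul_norm_le_integral_norm_add hk' hk hac hcb hxc
  rw [div_add' _ _ _ hh.ne', le_div_iff₀ hh]
  nlinarith

end AbsolutelyContinuous

theorem cube_le_of_forall_le_div_add_sqrt {A B C : ℝ} (hA : 0 ≤ A) (hB : 0 ≤ B) (hC : 0 ≤ C)
    (hbound : ∀ h : ℝ, 0 < h → h ≤ 1 → A ≤ (C / h + √(h * B)) * C) :
    A ^ 3 ≤ 8 * (A + B) * C ^ 4 := by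
  rcases hC.eq_or_lt with rfl | hCpos
  · have hA0 : A ≤ 0 := by simpa using hbound 1 one_pos le_rfl
    simp [le_antisymm hA0 hA]
  by_cases hAC : A ≤ 2 * C ^ 2
  · nlinarith [mul_le_mul_of_nonneg_left (pow_le_pow_left₀ hA hAC 2) hA]
  rw [not_le] at hAC
  have hApos : 0 < A := lt_of_le_of_lt (by positivity) hAC
  set h := 2 * C ^ 2 / A with hdef
  have hh : 0 < h := by positivity
  have hC2 : C / h * C = A / 2 := by rw [hdef]; field_simp
  have hhalf : A / 2 ≤ √(h * B) * C := by linarith [hbound h hh ((div_le_one hApos).2 hAC.le)]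
  have hsq : (A / 2) ^ 2 ≤ h * B * C ^ 2 := by
    calc (A / 2) ^ 2 ≤ (√(h * B) * C) ^ 2 := pow_le_pow_left₀ (by positivity) hhalf 2
      _ = h * B * C ^ 2 := by rw [mul_pow, Real.sq_sqrt (by positivity)]
  have hcube : A ^ 3 ≤ 8 * B * C ^ 4 := by
    have : A * (h * B * C ^ 2) = 2 * B * C ^ 4 := by rw [hdef]; field_simp
    nlinarith [mul_le_mul_of_nonneg_left hsq hA]
  nlinarith [pow_nonneg hC 4]

theorem rpow_half_le_of_pow_three_le {A S C M : ℝ} (hA : 0 ≤ A) (hS : 0 ≤ S) (hC : 0 ≤ C)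
    (hM : 0 ≤ M) (h : A ^ 3 ≤ M ^ 6 * S * C ^ 4) :
    A ^ ((1 : ℝ) / 2) ≤ M * S ^ ((1 : ℝ) / 6) * C ^ ((2 : ℝ) / 3) := by
  have hsixth : ∀ {x : ℝ} (n : ℕ), 0 ≤ x → (x ^ n) ^ ((1 : ℝ) / 6) = x ^ ((n : ℝ) / 6) :=
    fun n hx => by rw [← Real.rpow_natCast, ← Real.rpow_mul hx, mul_one_div]
  calc A ^ ((1 : ℝ) / 2) = (A ^ 3) ^ ((1 : ℝ) / 6) := by rw [hsixth 3 hA]; norm_num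
    _ ≤ (M ^ 6 * S * C ^ 4) ^ ((1 : ℝ) / 6) := Real.rpow_le_rpow (by positivity) h (by norm_num)
    _ = M * S ^ ((1 : ℝ) / 6) * C ^ ((2 : ℝ) / 3) := by
      rw [Real.mul_rpow (by positivity) (by positivity), Real.mul_rpow (by positivity) hS,
        hsixth 6 hM, hsixth 4 hC]
      norm_num

/-- Nash-type inequality on the unit interval: there is `M₁ > 0` such that
`‖k‖_{L²} ≤ M₁ ‖k‖_{H¹}^{1/3} ‖k‖_{L¹}^{2/3}` for all `k ∈ H¹(0,1)`
(given through its absolutely continuous representative with derivative `k'`). -/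
theorem stmt_6 :
    ∃ M₁ > (0:ℝ), ∀ k k' : ℝ → ℂ,
      IntervalIntegrable k' volume 0 1 →
      IntervalIntegrable (fun x => ‖k' x‖ ^ 2) volume 0 1 →
      (∀ x ∈ Set.Icc (0:ℝ) 1, k x = k 0 + ∫ s in (0:ℝ)..x, k' s) →
      (∫ x in (0:ℝ)..1, ‖k x‖ ^ 2) ^ ((1:ℝ)/2) ≤
        M₁ * ((∫ x in (0:ℝ)..1, ‖k x‖ ^ 2) + ∫ x in (0:ℝ)..1, ‖k' x‖ ^ 2) ^ ((1:ℝ)/6) *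
          (∫ x in (0:ℝ)..1, ‖k x‖) ^ ((2:ℝ)/3) := by
  refine ⟨√2, by positivity, fun k k' hk' hk'2 hk => ?_⟩
  have h01 : (0 : ℝ) ≤ 1 := zero_le_one
  have hA : 0 ≤ ∫ x in (0:ℝ)..1, ‖k x‖ ^ 2 := integral_nonneg h01 fun _ _ => by positivity
  have hB : 0 ≤ ∫ x in (0:ℝ)..1, ‖k' x‖ ^ 2 := integral_nonneg h01 fun _ _ => by positivity
  have hC : 0 ≤ ∫ x in (0:ℝ)..1, ‖k x‖ := integral_nonneg h01 fun _ _ => by positivity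
  refine rpow_half_le_of_pow_three_le hA (add_nonneg hA hB) hC (by positivity) ?_
  have hM : √2 ^ 6 = (8 : ℝ) := by
    rw [show √2 ^ 6 = (√2 ^ 2) ^ 3 by ring, Real.sq_sqrt zero_le_two]
    norm_num
  rw [hM]
  refine cube_le_of_forall_le_div_add_sqrt hA hB hC fun h hh hh1 => ?_
  exact integral_norm_sq_le_mul_integral_norm h01 (continuousOn_of_eq_add_integral hk' hk)
    fun x hx => norm_le_div_add_sqrt_of_eq_add_integral hk' hk'2 hk hh (by linarith) hx
end

section
/- Let V₀ be the space of H¹ edge functions on a finite connected network, continuous at vertices and vanishing at the distinguished vertex v_n. Then the bilinear pairing (f|g)_{V₀} := Σ_{j=1}^m ∫₀¹ f_j'(x) conj(g_j'(x)) dx defines an inner product on V₀ (in particular it is positive definite: (f|f)_{V₀} = 0 implies f = 0), and the induced norm is equivalent to the norm inherited from (H¹(0,1))^m. -/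
/-!
Every `f ∈ V₀` is controlled pointwise by the square root of its Dirichlet energy
`E = ∑ⱼ ∫₀¹ ‖fⱼ'‖²`: by Cauchy–Schwarz, `fⱼ` moves by at most `√E` along an edge, so
nodal values change by at most `√E` across each edge, and since every vertex is joined
to the Dirichlet vertex `v_n` by a path, `‖d v‖ ≤ k_v √E`. Hence `‖fⱼ(x)‖ ≤ K √E`
uniformly, which gives both `E = 0 → f = 0` and `‖f‖²_{H¹} ≤ (m K² + 1) E`.
-/

open MeasureTheory

/-- `f = (f,f',d)` is a member of `V₀`: edgewise `H¹` (absolutely continuous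
representative with square-integrable derivative), continuous at the vertices with
nodal values `d`, and vanishing at the Dirichlet vertex `vn`. -/
def IsV0 (n m : ℕ) (tail head : Fin m → Fin n) (vn : Fin n)
    (f f' : Fin m → ℝ → ℂ) (d : Fin n → ℂ) : Prop :=
  (∀ j, IntervalIntegrable (f' j) volume 0 1) ∧
  (∀ j, IntervalIntegrable (fun x => ‖f' j x‖ ^ 2) volume 0 1) ∧
  (∀ j, ∀ x ∈ Set.Icc (0:ℝ) 1, f j x = f j 0 + ∫ s in (0:ℝ)..x, f' j s) ∧
  (∀ j, f j 0 = d (tail j)) ∧ (∀ j, f j 1 = d (head j)) ∧ d vn = 0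

theorem sq_intervalIntegral_le_mul_integral_sq {g : ℝ → ℝ} {a b : ℝ} (hab : a ≤ b)
    (hg : IntervalIntegrable g volume a b)
    (hg2 : IntervalIntegrable (fun s => g s ^ 2) volume a b) :
    (∫ s in a..b, g s) ^ 2 ≤ (b - a) * ∫ s in a..b, g s ^ 2 := by
  have hquad : ∀ c : ℝ, ∫ s in a..b, (g s - c) ^ 2 =
      (b - a) * (c * c) + (-2 * ∫ s in a..b, g s) * c + ∫ s in a..b, g s ^ 2 := by
    intro c
    have hexpand : (fun s => (g s - c) ^ 2) = fun s => g s ^ 2 - 2 * c * g s + c ^ 2 := by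
      funext s; ring
    rw [hexpand, intervalIntegral.integral_add (hg2.sub (hg.const_mul _)) intervalIntegrable_const,
      intervalIntegral.integral_sub hg2 (hg.const_mul _), intervalIntegral.integral_const_mul,
      intervalIntegral.integral_const, smul_eq_mul]
    ring
  -- the quadratic `c ↦ ∫ (g - c)²` is nonnegative, so its discriminant is not
  have hdisc := discrim_le_zero fun c =>
    (hquad c).symm ▸ intervalIntegral.integral_nonneg hab fun s _ => sq_nonneg (g s - c)
  rw [discrim] at hdisc
  linarith

theorem norm_intervalIntegral_le_sqrt_integral_norm_sq {E : Type*} [NormedAddCommGroup E]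
    [NormedSpace ℝ E] {f : ℝ → E} (hf : IntervalIntegrable f volume 0 1)
    (hf2 : IntervalIntegrable (fun s => ‖f s‖ ^ 2) volume 0 1) {x : ℝ} (hx : x ∈ Set.Icc (0:ℝ) 1) :
    ‖∫ s in (0:ℝ)..x, f s‖ ≤ √(∫ s in (0:ℝ)..1, ‖f s‖ ^ 2) := by
  have hsub : Set.uIcc (0:ℝ) x ⊆ Set.uIcc 0 1 := by
    rw [Set.uIcc_of_le hx.1, Set.uIcc_of_le zero_le_one]
    exact Set.Icc_subset_Icc_right hx.2
  have hsub' : Set.uIcc x 1 ⊆ Set.uIcc 0 1 := by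
    rw [Set.uIcc_of_le hx.2, Set.uIcc_of_le zero_le_one]
    exact Set.Icc_subset_Icc_left hx.1
  have hsplit : (∫ s in (0:ℝ)..x, ‖f s‖ ^ 2) + ∫ s in x..1, ‖f s‖ ^ 2 =
      ∫ s in (0:ℝ)..1, ‖f s‖ ^ 2 :=
    intervalIntegral.integral_add_adjacent_intervals (hf2.mono_set hsub) (hf2.mono_set hsub')
  have htail : 0 ≤ ∫ s in x..1, ‖f s‖ ^ 2 :=
    intervalIntegral.integral_nonneg hx.2 fun s _ => sq_nonneg _
  have hhead : 0 ≤ ∫ s in (0:ℝ)..x, ‖f s‖ ^ 2 :=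
    intervalIntegral.integral_nonneg hx.1 fun s _ => sq_nonneg _
  have hcs := sq_intervalIntegral_le_mul_integral_sq hx.1 (hf.norm.mono_set hsub)
    (hf2.mono_set hsub)
  rw [Real.le_sqrt (norm_nonneg _) (by linarith)]
  calc ‖∫ s in (0:ℝ)..x, f s‖ ^ 2 ≤ (∫ s in (0:ℝ)..x, ‖f s‖) ^ 2 := by
        gcongr
        exact intervalIntegral.norm_integral_le_integral_norm hx.1
    _ ≤ x * ∫ s in (0:ℝ)..x, ‖f s‖ ^ 2 := by simpa using hcs
    _ ≤ ∫ s in (0:ℝ)..1, ‖f s‖ ^ 2 := by nlinarith [hx.2]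

theorem integral_norm_sq_le_of_norm_le {E : Type*} [NormedAddCommGroup E] {g : ℝ → E} {M : ℝ}
    (hg : ∀ x ∈ Set.Icc (0:ℝ) 1, ‖g x‖ ≤ M) : ∫ x in (0:ℝ)..1, ‖g x‖ ^ 2 ≤ M ^ 2 := by
  -- no integrability is needed: a non-integrable integrand has integral `0`
  have hpt : ∀ x ∈ Set.uIoc (0:ℝ) 1, ‖‖g x‖ ^ 2‖ ≤ M ^ 2 := fun x hx => by
    rw [Set.uIoc_of_le zero_le_one] at hx
    rw [Real.norm_of_nonneg (sq_nonneg _)]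
    exact pow_le_pow_left₀ (norm_nonneg _) (hg x (Set.Ioc_subset_Icc_self hx)) 2
  simpa using (le_abs_self _).trans (intervalIntegral.norm_integral_le_of_norm_le_const hpt)

theorem exists_norm_sub_le_mul_of_reflTransGen {α E : Type*} [SeminormedAddCommGroup E]
    {r : α → α → Prop} {a b : α} (h : Relation.ReflTransGen r a b) :
    ∃ k : ℕ, ∀ (d : α → E) (δ : ℝ), (∀ x y, r x y → ‖d y - d x‖ ≤ δ) →
      ‖d b - d a‖ ≤ k * δ := by
  induction h with
  | refl => exact ⟨0, fun d δ _ => by simp⟩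
  | tail _ hbc ih =>
    obtain ⟨k, hk⟩ := ih
    refine ⟨k + 1, fun d δ hd => ?_⟩
    calc ‖d _ - d a‖ ≤ ‖d _ - d _‖ + ‖d _ - d a‖ := norm_sub_le_norm_sub_add_norm_sub _ _ _
      _ ≤ δ + k * δ := add_le_add (hd _ _ hbc) (hk d δ hd)
      _ = (k + 1 : ℕ) * δ := by push_cast; ring

noncomputable def dirichletEnergy {m : ℕ} (f' : Fin m → ℝ → ℂ) : ℝ :=
  ∑ j, ∫ x in (0:ℝ)..1, ‖f' j x‖ ^ 2

theorem integral_norm_sq_nonneg {E : Type*} [NormedAddCommGroup E] (g : ℝ → E) :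
    0 ≤ ∫ x in (0:ℝ)..1, ‖g x‖ ^ 2 :=
  intervalIntegral.integral_nonneg zero_le_one fun _ _ => sq_nonneg _

theorem dirichletEnergy_nonneg {m : ℕ} (f' : Fin m → ℝ → ℂ) : 0 ≤ dirichletEnergy f' :=
  Finset.sum_nonneg fun j _ => integral_norm_sq_nonneg (f' j)

theorem integral_norm_sq_le_dirichletEnergy {m : ℕ} (f' : Fin m → ℝ → ℂ) (j : Fin m) :
    ∫ x in (0:ℝ)..1, ‖f' j x‖ ^ 2 ≤ dirichletEnergy f' :=
  Finset.single_le_sum (f := fun i => ∫ x in (0:ℝ)..1, ‖f' i x‖ ^ 2)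
    (fun i _ => integral_norm_sq_nonneg (f' i)) (Finset.mem_univ j)

namespace IsV0

variable {n m : ℕ} {tail head : Fin m → Fin n} {vn : Fin n} {f f' : Fin m → ℝ → ℂ}
  {d : Fin n → ℂ}

theorem norm_sub_tail_le (hf : IsV0 n m tail head vn f f' d) (j : Fin m) {x : ℝ}
    (hx : x ∈ Set.Icc (0:ℝ) 1) : ‖f j x - d (tail j)‖ ≤ √(dirichletEnergy f') := by
  obtain ⟨h1, h2, hprim, htail, -⟩ := hf
  rw [hprim j x hx, htail, add_sub_cancel_left]
  exact (norm_intervalIntegral_le_sqrt_integral_norm_sq (h1 j) (h2 j) hx).trans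
    (Real.sqrt_le_sqrt (integral_norm_sq_le_dirichletEnergy f' j))

theorem norm_head_sub_tail_le (hf : IsV0 n m tail head vn f f' d) (j : Fin m) :
    ‖d (head j) - d (tail j)‖ ≤ √(dirichletEnergy f') := by
  rw [← hf.2.2.2.2.1 j]
  exact hf.norm_sub_tail_le j ⟨zero_le_one, le_rfl⟩

end IsV0

theorem exists_norm_le_mul_sqrt_dirichletEnergy (n m : ℕ) (tail head : Fin m → Fin n)
    (vn : Fin n)
    (hconn : ∀ v : Fin n, Relation.ReflTransGen
      (fun a b => ∃ j, (tail j = a ∧ head j = b) ∨ (tail j = b ∧ head j = a)) vn v) :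
    ∃ K : ℝ, ∀ f f' d, IsV0 n m tail head vn f f' d →
      ∀ j, ∀ x ∈ Set.Icc (0:ℝ) 1, ‖f j x‖ ≤ K * √(dirichletEnergy f') := by
  choose k hk using fun v => exists_norm_sub_le_mul_of_reflTransGen (E := ℂ) (hconn v)
  refine ⟨∑ v, (k v : ℝ) + 1, fun f f' d hf j x hx => ?_⟩
  have hsqrt := Real.sqrt_nonneg (dirichletEnergy f')
  have hedge : ∀ a b, (∃ j, (tail j = a ∧ head j = b) ∨ (tail j = b ∧ head j = a)) →
      ‖d b - d a‖ ≤ √(dirichletEnergy f') := by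
    rintro a b ⟨i, ⟨rfl, rfl⟩ | ⟨rfl, rfl⟩⟩
    · exact hf.norm_head_sub_tail_le i
    · exact norm_sub_rev (d (tail i)) _ ▸ hf.norm_head_sub_tail_le i
  have hvertex : ‖d (tail j)‖ ≤ (∑ v, (k v : ℝ)) * √(dirichletEnergy f') := by
    have hpath := hk (tail j) d _ hedge
    rw [hf.2.2.2.2.2, sub_zero] at hpath
    exact hpath.trans (mul_le_mul_of_nonneg_right
      (Finset.single_le_sum (fun v _ => Nat.cast_nonneg (k v)) (Finset.mem_univ _)) hsqrt)
  calc ‖f j x‖ ≤ ‖d (tail j)‖ + ‖f j x - d (tail j)‖ := norm_le_norm_add_norm_sub' _ _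
    _ ≤ _ := by linarith [hf.norm_sub_tail_le j hx]

/-- On a finite connected network with Dirichlet vertex `vn`, the pairing
`(f|g)_{V₀} = ∑_j ∫₀¹ f_j' conj(g_j')` is positive definite on `V₀`
(`(f|f)_{V₀} = 0` forces `f = 0`), and the induced norm is equivalent to the
`(H¹(0,1))^m` norm. -/
theorem stmt_8 (n m : ℕ) (tail head : Fin m → Fin n) (vn : Fin n)
    (hconn : ∀ v : Fin n, Relation.ReflTransGen
      (fun a b => ∃ j, (tail j = a ∧ head j = b) ∨ (tail j = b ∧ head j = a)) vn v) :
    (∀ f f' d, IsV0 n m tail head vn f f' d →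
      (∑ j, ∫ x in (0:ℝ)..1, ‖f' j x‖ ^ 2) = 0 →
        ∀ j, ∀ x ∈ Set.Icc (0:ℝ) 1, f j x = 0) ∧
    ∃ C > (0:ℝ), ∀ f f' d, IsV0 n m tail head vn f f' d →
      (∑ j, ∫ x in (0:ℝ)..1, ‖f' j x‖ ^ 2) ≤
          (∑ j, ((∫ x in (0:ℝ)..1, ‖f j x‖ ^ 2) + ∫ x in (0:ℝ)..1, ‖f' j x‖ ^ 2)) ∧
      (∑ j, ((∫ x in (0:ℝ)..1, ‖f j x‖ ^ 2) + ∫ x in (0:ℝ)..1, ‖f' j x‖ ^ 2)) ≤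
        C * ∑ j, ∫ x in (0:ℝ)..1, ‖f' j x‖ ^ 2 := by
  obtain ⟨K, hK⟩ := exists_norm_le_mul_sqrt_dirichletEnergy n m tail head vn hconn
  refine ⟨fun f f' d hf hE j x hx => ?_, m * K ^ 2 + 1, by positivity, fun f f' d hf => ⟨?_, ?_⟩⟩
  · have hbound := hK f f' d hf j x hx
    rwa [dirichletEnergy, hE, Real.sqrt_zero, mul_zero, norm_le_zero_iff] at hbound
  · exact Finset.sum_le_sum fun j _ => le_add_of_nonneg_left (integral_norm_sq_nonneg (f j))
  · change _ ≤ _ * dirichletEnergy f'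
    calc (∑ j, ((∫ x in (0:ℝ)..1, ‖f j x‖ ^ 2) + ∫ x in (0:ℝ)..1, ‖f' j x‖ ^ 2))
        = (∑ j, ∫ x in (0:ℝ)..1, ‖f j x‖ ^ 2) + dirichletEnergy f' := Finset.sum_add_distrib
      _ ≤ (∑ _j : Fin m, (K * √(dirichletEnergy f')) ^ 2) + dirichletEnergy f' := by
        gcongr with j
        exact integral_norm_sq_le_of_norm_le (hK f f' d hf j)
      _ = (m * K ^ 2 + 1) * dirichletEnergy f' := by
        simp only [mul_pow, Real.sq_sqrt (dirichletEnergy_nonneg f'), Finset.sum_const,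
          Finset.card_univ, Fintype.card_fin, nsmul_eq_mul]
        ring
end
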